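/- arXiv:1805.04320 — 3 statements merged into one kernel-verified Lean document; each statement's English description precedes it below -/
import Mathlib

section
/- Let v_U ≥ 0, v_Z > 0, c_U > 0, c_Z > 0, ρ ≠ 0 and η > 0, and define the integer sample sizes n_Z := ⌈(1/η²)(ρ² v_Z + √(v_U v_Z ρ² c_U/c_Z))⌉ and n_U := ⌈n_Z √(c_Z v_U/(c_U v_Z ρ²))⌉ (assuming v_U > 0 so the latter is defined). Then the resulting two-sample controlled estimator variance satisfies v_U/n_U + ρ² v_Z/n_Z ≤ η², i.e., the prescribed tolerance η² on the variance is met (and in general the achieved variance is slightly lower, due to the ceiling function). -/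
/-!
Write `t = √(v_U v_Z ρ² c_U/c_Z)` and `s = √(c_Z v_U/(c_U v_Z ρ²))`, so that `s t = v_U`.
Since `n_U ≥ s n_Z`, the first term obeys `v_U/n_U ≤ s t/(s n_Z) = t/n_Z`; hence the variance is
at most `(ρ² v_Z + t)/n_Z`, and `n_Z ≥ (ρ² v_Z + t)/η²` makes this at most `η²`.
-/

theorem Real.sqrt_div_mul_sqrt_mul {v k : ℝ} (hv : 0 ≤ v) (hk : 0 < k) :
    √(v / k) * √(v * k) = v := by
  rw [← Real.sqrt_mul (div_nonneg hv hk.le), show v / k * (v * k) = v ^ 2 by field_simp,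
    Real.sqrt_sq hv]

theorem mul_div_le_div_of_mul_le {s t m n : ℝ} (hs : 0 < s) (ht : 0 ≤ t) (hn : 0 < n)
    (h : s * n ≤ m) : s * t / m ≤ t / n :=
  calc s * t / m ≤ s * t / (s * n) := div_le_div_of_nonneg_left (by positivity) (by positivity) h
    _ = t / n := mul_div_mul_left t n hs.ne'

theorem div_natCeil_div_le (a : ℝ) {c : ℝ} (hc : 0 < c) : a / ⌈a / c⌉₊ ≤ c :=
  div_le_of_le_mul₀ (Nat.cast_nonneg _) hc.le ((div_le_iff₀' hc).1 (Nat.le_ceil _))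

/-- **Integer sample sizes via ceiling meet the variance tolerance.** With
`n_Z := ⌈(1/η²)(ρ² v_Z + √(v_U v_Z ρ² c_U/c_Z))⌉` and
`n_U := ⌈n_Z √(c_Z v_U/(c_U v_Z ρ²))⌉`, the variance of the two-sample controlled estimator
satisfies `v_U/n_U + ρ² v_Z/n_Z ≤ η²`. -/
theorem ceiling_sample_sizes_meet_tolerance
    (vU vZ cU cZ ρ η : ℝ)
    (hvU : 0 < vU) (hvZ : 0 < vZ) (hcU : 0 < cU) (hcZ : 0 < cZ)
    (hρ : ρ ≠ 0) (hη : 0 < η)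
    (nZ nU : ℕ)
    (hnZ : nZ = ⌈(1 / η ^ 2) * (ρ ^ 2 * vZ + Real.sqrt (vU * vZ * ρ ^ 2 * (cU / cZ)))⌉₊)
    (hnU : nU = ⌈(nZ : ℝ) * Real.sqrt (cZ * vU / (cU * vZ * ρ ^ 2))⌉₊) :
    vU / (nU : ℝ) + ρ ^ 2 * vZ / (nZ : ℝ) ≤ η ^ 2 := by
  set t := √(vU * vZ * ρ ^ 2 * (cU / cZ))
  set s := √(cZ * vU / (cU * vZ * ρ ^ 2))
  have hk : 0 < cU * vZ * ρ ^ 2 / cZ := by positivity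
  have hst : s * t = vU := by
    convert Real.sqrt_div_mul_sqrt_mul hvU.le hk using 3 <;> field_simp
  have hs : 0 < s := Real.sqrt_pos.2 (by positivity)
  rw [one_div_mul_eq_div] at hnZ
  have hnZ_pos : (0 : ℝ) < nZ := by rw [hnZ]; exact_mod_cast Nat.ceil_pos.2 (by positivity)
  have hsnZ : s * nZ ≤ nU := by rw [hnU, mul_comm]; exact Nat.le_ceil _
  calc vU / nU + ρ ^ 2 * vZ / nZ
      ≤ t / nZ + ρ ^ 2 * vZ / nZ := by
        rw [← hst]
        exact add_le_add_left (mul_div_le_div_of_mul_le hs (Real.sqrt_nonneg _) hnZ_pos hsnZ) _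
    _ = (ρ ^ 2 * vZ + t) / nZ := by ring
    _ ≤ η ^ 2 := hnZ ▸ div_natCeil_div_le _ (by positivity)
end

section
/- Let (Ω, 𝓕, ℙ) be a probability space, ζ_0, …, ζ_n square-integrable real random variables, ρ ∈ ℝ^n, integers 1 ≤ m_0 ≤ m_1 ≤ … ≤ m_n, and (ω_k)_{k=1}^{m_n} an i.i.d. sample with common law ℙ. Then the variance of the multi-fidelity Monte Carlo estimator ϑ_m(X) := (1/m_0) ∑_{k=1}^{m_0} ζ_0(ω_k) + ∑_{j=1}^n ρ_j ( (1/m_j) ∑_{k=1}^{m_j} ζ_j(ω_k) − (1/m_{j−1}) ∑_{k=1}^{m_{j−1}} ζ_j(ω_k) ) equals E(m, ρ) := Var(ζ_0)/m_0 + ∑_{j=1}^n (1/m_{j−1} − 1/m_j) ( ρ_j² Var(ζ_j) − 2 ρ_j Cov(ζ_0, ζ_j) ). -/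
/-!
Write `A_j(p)` for the mean of `ζ_j` over the first `p` draws, so that the estimator is
`A_0(m_0) + ∑ ρ_j (A_j(m_j) - A_j(m_{j-1}))`. Since only the `min p q` shared draws are
correlated, `Cov(A_i(p), A_j(q)) = Cov(ζ_i, ζ_j) / max p q`. As the sample sizes are
nondecreasing, this makes the corrections pairwise uncorrelated and gives their covariance
with `A_0(m_0)` and their variances in closed form; a bilinear expansion of the variance of
the sum then yields the formula.
-/

open MeasureTheory ProbabilityTheory

noncomputable def cov {Ω : Type*} [MeasurableSpace Ω] (P : Measure Ω) (A B : Ω → ℝ) : ℝ :=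
  ∫ ω, (A ω - ∫ ω', A ω' ∂P) * (B ω - ∫ ω', B ω' ∂P) ∂P

open Finset

lemma cov_eq_covariance {Ω : Type*} [MeasurableSpace Ω] (P : Measure Ω) (A B : Ω → ℝ) :
    cov P A B = cov[A, B; P] := rfl

section Uncorrelated

variable {Ω ι : Type*} [MeasurableSpace Ω] {μ : Measure Ω} [IsFiniteMeasure μ]

lemma variance_add_sum_mul_of_uncorrelated {s : Finset ι} {A : Ω → ℝ} {D : ι → Ω → ℝ}
    (c : ι → ℝ) (hA : MemLp A 2 μ) (hD : ∀ i ∈ s, MemLp (D i) 2 μ)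
    (huncorr : ∀ i ∈ s, ∀ j ∈ s, i ≠ j → cov[D i, D j; μ] = 0) :
    Var[fun ω ↦ A ω + ∑ i ∈ s, c i * D i ω; μ]
      = Var[A; μ] + ∑ i ∈ s, (2 * c i * cov[A, D i; μ] + c i ^ 2 * Var[D i; μ]) := by
  have hcD : ∀ i ∈ s, MemLp (fun ω ↦ c i * D i ω) 2 μ := fun i hi ↦ (hD i hi).const_mul (c i)
  have hcross : cov[A, fun ω ↦ ∑ i ∈ s, c i * D i ω; μ] = ∑ i ∈ s, c i * cov[A, D i; μ] := by
    rw [covariance_fun_sum_right' hcD hA]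
    simp only [covariance_const_mul_right]
  have hdiag : Var[fun ω ↦ ∑ i ∈ s, c i * D i ω; μ] = ∑ i ∈ s, c i ^ 2 * Var[D i; μ] := by
    rw [← covariance_self (memLp_finsetSum s hcD).aemeasurable,
      covariance_fun_sum_fun_sum' hcD hcD]
    refine sum_congr rfl fun i hi ↦ ?_
    have hoff : ∀ j ∈ s, j ≠ i → cov[fun ω ↦ c i * D i ω, fun ω ↦ c j * D j ω; μ] = 0 :=
      fun j hj hji ↦ by
        simp only [covariance_const_mul_left, covariance_const_mul_right,
          huncorr i hi j hj hji.symm, mul_zero]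
    rw [sum_eq_single_of_mem i hi hoff, covariance_const_mul_left, covariance_const_mul_right,
      covariance_self (hD i hi).aemeasurable]
    ring
  rw [variance_fun_add hA (memLp_finsetSum s hcD), hcross, hdiag, mul_sum, add_assoc,
    ← sum_add_distrib]
  simp only [mul_assoc]

end Uncorrelated

section SampleMean

variable {Ω Ω' : Type*} [MeasurableSpace Ω] [MeasurableSpace Ω'] {P : Measure Ω}
  {P' : Measure Ω'} {ωs : ℕ → Ω' → Ω} {X Y : Ω → ℝ}

structure IsIIDSample (ωs : ℕ → Ω' → Ω) (P' : Measure Ω') (P : Measure Ω) : Prop where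
  indep : iIndepFun ωs P'
  map_eq : ∀ k, P'.map (ωs k) = P

noncomputable def sampleMean (ωs : ℕ → Ω' → Ω) (p : ℕ) (X : Ω → ℝ) (ω' : Ω') : ℝ :=
  1 / (p : ℝ) * ∑ k ∈ range p, X (ωs k ω')

namespace IsIIDSample

variable [IsProbabilityMeasure P]

lemma aemeasurable (hω : IsIIDSample ωs P' P) (k : ℕ) : AEMeasurable (ωs k) P' :=
  .of_map_ne_zero (hω.map_eq k ▸ IsProbabilityMeasure.ne_zero P)

lemma memLp_comp (hω : IsIIDSample ωs P' P) (hX : MemLp X 2 P) (k : ℕ) :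
    MemLp (X ∘ ωs k) 2 P' :=
  (hω.map_eq k ▸ hX).comp_of_map (hω.aemeasurable k)

lemma memLp_sampleMean (hω : IsIIDSample ωs P' P) (hX : MemLp X 2 P) (p : ℕ) :
    MemLp (sampleMean ωs p X) 2 P' :=
  (memLp_finsetSum _ fun k _ ↦ hω.memLp_comp hX k).const_mul _

lemma covariance_comp_comp (hω : IsIIDSample ωs P' P) (hX : MemLp X 2 P) (hY : MemLp Y 2 P)
    (k l : ℕ) :
    cov[X ∘ ωs k, Y ∘ ωs l; P'] = if k = l then cov[X, Y; P] else 0 := by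
  split_ifs with hkl
  · subst hkl
    rw [← covariance_map (hω.map_eq k ▸ hX.aestronglyMeasurable)
      (hω.map_eq k ▸ hY.aestronglyMeasurable) (hω.aemeasurable k), hω.map_eq k]
  · refine IndepFun.covariance_eq_zero ?_ (hω.memLp_comp hX k) (hω.memLp_comp hY l)
    exact (hω.indep.indepFun hkl).comp₀ (hω.aemeasurable k) (hω.aemeasurable l)
      (hω.map_eq k ▸ hX.aemeasurable) (hω.map_eq l ▸ hY.aemeasurable)

variable [IsFiniteMeasure P']

lemma covariance_sum_comp_sum_comp (hω : IsIIDSample ωs P' P) (hX : MemLp X 2 P)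
    (hY : MemLp Y 2 P) (p q : ℕ) :
    cov[fun ω' ↦ ∑ k ∈ range p, X (ωs k ω'), fun ω' ↦ ∑ l ∈ range q, Y (ωs l ω'); P']
      = (min p q : ℕ) * cov[X, Y; P] := by
  refine (covariance_fun_sum_fun_sum' (X := fun k ↦ X ∘ ωs k) (Y := fun l ↦ Y ∘ ωs l)
    (fun k _ ↦ hω.memLp_comp hX k) (fun l _ ↦ hω.memLp_comp hY l)).trans ?_
  simp only [hω.covariance_comp_comp hX hY, sum_ite_eq, sum_ite_mem, range_inter_range,
    sum_const, card_range, nsmul_eq_mul]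

lemma covariance_sampleMean (hω : IsIIDSample ωs P' P) (hX : MemLp X 2 P) (hY : MemLp Y 2 P)
    {p q : ℕ} (hp : 1 ≤ p) (hq : 1 ≤ q) :
    cov[sampleMean ωs p X, sampleMean ωs q Y; P'] = cov[X, Y; P] / (max p q : ℕ) := by
  unfold sampleMean
  rw [covariance_const_mul_left, covariance_const_mul_right,
    hω.covariance_sum_comp_sum_comp hX hY]
  have hp' : (p : ℝ) ≠ 0 := by positivity
  have hq' : (q : ℝ) ≠ 0 := by positivity
  rcases le_total p q with h | h
  · simp only [min_eq_left h, max_eq_right h]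
    field_simp
  · simp only [min_eq_right h, max_eq_left h]
    field_simp

lemma variance_sampleMean (hω : IsIIDSample ωs P' P) (hX : MemLp X 2 P) {p : ℕ} (hp : 1 ≤ p) :
    Var[sampleMean ωs p X; P'] = Var[X; P] / p := by
  rw [← covariance_self (hω.memLp_sampleMean hX p).aemeasurable,
    hω.covariance_sampleMean hX hX hp hp, max_self, covariance_self hX.aemeasurable]

lemma covariance_sampleMean_sampleMean_sub (hω : IsIIDSample ωs P' P) (hX : MemLp X 2 P)
    (hY : MemLp Y 2 P) {p a b : ℕ} (hp : 1 ≤ p) (hpa : p ≤ a) (hab : a ≤ b) :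
    cov[sampleMean ωs p X, fun ω' ↦ sampleMean ωs b Y ω' - sampleMean ωs a Y ω'; P']
      = cov[X, Y; P] * (1 / b - 1 / a) := by
  rw [covariance_fun_sub_right (hω.memLp_sampleMean hX p) (hω.memLp_sampleMean hY b)
      (hω.memLp_sampleMean hY a),
    hω.covariance_sampleMean hX hY hp (hp.trans (hpa.trans hab)),
    hω.covariance_sampleMean hX hY hp (hp.trans hpa), max_eq_right (hpa.trans hab),
    max_eq_right hpa]
  ring

lemma covariance_sampleMean_sub_sampleMean_sub_eq_zero (hω : IsIIDSample ωs P' P)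
    (hX : MemLp X 2 P) (hY : MemLp Y 2 P) {a b c d : ℕ} (ha : 1 ≤ a) (hab : a ≤ b)
    (hbc : b ≤ c) (hcd : c ≤ d) :
    cov[fun ω' ↦ sampleMean ωs b X ω' - sampleMean ωs a X ω',
      fun ω' ↦ sampleMean ωs d Y ω' - sampleMean ωs c Y ω'; P'] = 0 := by
  rw [covariance_fun_sub_left (Z := fun ω' ↦ sampleMean ωs d Y ω' - sampleMean ωs c Y ω')
      (hω.memLp_sampleMean hX b) (hω.memLp_sampleMean hX a)
      ((hω.memLp_sampleMean hY d).sub (hω.memLp_sampleMean hY c)),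
    hω.covariance_sampleMean_sampleMean_sub hX hY (ha.trans hab) hbc hcd,
    hω.covariance_sampleMean_sampleMean_sub hX hY ha (hab.trans hbc) hcd, sub_self]

lemma variance_sampleMean_sub_sampleMean (hω : IsIIDSample ωs P' P) (hX : MemLp X 2 P)
    {a b : ℕ} (ha : 1 ≤ a) (hab : a ≤ b) :
    Var[fun ω' ↦ sampleMean ωs b X ω' - sampleMean ωs a X ω'; P']
      = Var[X; P] * (1 / a - 1 / b) := by
  rw [variance_fun_sub (hω.memLp_sampleMean hX b) (hω.memLp_sampleMean hX a),
    hω.variance_sampleMean hX (ha.trans hab), hω.variance_sampleMean hX ha,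
    hω.covariance_sampleMean hX hX (ha.trans hab) ha, max_eq_left hab,
    covariance_self hX.aemeasurable]
  ring

end IsIIDSample

end SampleMean

theorem multifidelity_estimator_variance_general
    {Ω : Type*} [MeasurableSpace Ω] (P : Measure Ω) [IsProbabilityMeasure P]
    {Ω' : Type*} [MeasurableSpace Ω'] (P' : Measure Ω') [IsProbabilityMeasure P']
    (n : ℕ) (ζ : ℕ → Ω → ℝ)
    (hζ : ∀ j, j ≤ n → MemLp (ζ j) 2 P)
    (ρ : ℕ → ℝ) (m : ℕ → ℕ)
    (hm0 : 1 ≤ m 0) (hmono : ∀ j, j < n → m j ≤ m (j + 1))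
    (ωs : ℕ → Ω' → Ω)
    (hindep : iIndepFun ωs P')
    (hlaw : ∀ k, Measure.map (ωs k) P' = P)
    (ϑ : Ω' → ℝ)
    (hϑ : ϑ = fun ω' =>
      (1 / (m 0 : ℝ)) * ∑ k ∈ Finset.range (m 0), ζ 0 (ωs k ω')
      + ∑ j ∈ Finset.Icc 1 n, ρ j *
          ((1 / (m j : ℝ)) * ∑ k ∈ Finset.range (m j), ζ j (ωs k ω')
            - (1 / (m (j - 1) : ℝ)) * ∑ k ∈ Finset.range (m (j - 1)), ζ j (ωs k ω'))) :
    variance ϑ P' = variance (ζ 0) P / (m 0 : ℝ)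
      + ∑ j ∈ Finset.Icc 1 n, (1 / (m (j - 1) : ℝ) - 1 / (m j : ℝ)) *
          (ρ j ^ 2 * variance (ζ j) P - 2 * ρ j * cov P (ζ 0) (ζ j)) := by
  have hω : IsIIDSample ωs P' P := ⟨hindep, hlaw⟩
  have hm : MonotoneOn m (Set.Iic n) := monotoneOn_of_le_succ Set.ordConnected_Iic
    fun j _ _ hj ↦ hmono j (Order.succ_le_iff.1 hj)
  have hle : ∀ {i j}, i ≤ j → j ≤ n → m i ≤ m j := fun hij hjn ↦ hm (hij.trans hjn) hjn hij
  have hpos : ∀ j ≤ n, 1 ≤ m j := fun j hj ↦ hm0.trans (hle j.zero_le hj)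
  subst hϑ
  -- the estimator is, up to unfolding `sampleMean`, `A + ∑ j ∈ Icc 1 n, ρ j * D j`
  refine (variance_add_sum_mul_of_uncorrelated (A := sampleMean ωs (m 0) (ζ 0))
    (D := fun j ω' ↦ sampleMean ωs (m j) (ζ j) ω' - sampleMean ωs (m (j - 1)) (ζ j) ω') ρ
    (hω.memLp_sampleMean (hζ 0 n.zero_le) _) (fun j hj ↦ ?_) fun i hi j hj hij ↦ ?_).trans ?_
  · have hjn : j ≤ n := (mem_Icc.1 hj).2
    exact (hω.memLp_sampleMean (hζ j hjn) _).sub (hω.memLp_sampleMean (hζ j hjn) _)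
  · wlog hlt : i < j generalizing i j
    · rw [covariance_comm]
      exact this j hj i hi hij.symm (by omega)
    obtain ⟨hi1, hin⟩ := mem_Icc.1 hi
    obtain ⟨hj1, hjn⟩ := mem_Icc.1 hj
    exact hω.covariance_sampleMean_sub_sampleMean_sub_eq_zero (hζ i hin) (hζ j hjn)
      (hpos _ (by omega)) (hle (by omega) hin) (hle (by omega) (by omega)) (hle (by omega) hjn)
  · rw [hω.variance_sampleMean (hζ 0 n.zero_le) hm0]
    congr 1
    refine sum_congr rfl fun j hj ↦ ?_
    obtain ⟨hj1, hjn⟩ := mem_Icc.1 hj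
    rw [hω.covariance_sampleMean_sampleMean_sub (hζ 0 n.zero_le) (hζ j hjn) hm0
        (hle (Nat.zero_le _) (by omega)) (hle (by omega) hjn),
      hω.variance_sampleMean_sub_sampleMean (hζ j hjn) (hpos _ (by omega)) (hle (by omega) hjn),
      cov_eq_covariance]
    ring

/-- **Variance of the multi-fidelity Monte Carlo estimator.** In the setting of nested
subsamples of a common i.i.d. sample `ωs` with law `P`, the estimator
`ϑ := (1/m 0) ∑_{k<m 0} ζ 0 (ωs k ·) + ∑_{j=1}^n ρ j ((1/m j) ∑_{k<m j} ζ j (ωs k ·)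
  − (1/m (j−1)) ∑_{k<m (j−1)} ζ j (ωs k ·))` has variance
`Var(ζ 0)/m 0 + ∑_{j=1}^n (1/m (j−1) − 1/m j)(ρ j² Var(ζ j) − 2 ρ j Cov(ζ 0, ζ j))`. -/
theorem multifidelity_estimator_variance
    {Ω : Type*} [MeasurableSpace Ω] (P : Measure Ω) [IsProbabilityMeasure P]
    {Ω' : Type*} [MeasurableSpace Ω'] (P' : Measure Ω') [IsProbabilityMeasure P']
    (n : ℕ) (ζ : ℕ → Ω → ℝ)
    (hζmeas : ∀ j, j ≤ n → Measurable (ζ j))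
    (hζ : ∀ j, j ≤ n → MemLp (ζ j) 2 P)
    (ρ : ℕ → ℝ) (m : ℕ → ℕ)
    (hm0 : 1 ≤ m 0) (hmono : ∀ j, j < n → m j ≤ m (j + 1))
    (ωs : ℕ → Ω' → Ω)
    (hωmeas : ∀ k, Measurable (ωs k))
    (hindep : iIndepFun ωs P')
    (hlaw : ∀ k, Measure.map (ωs k) P' = P)
    (ϑ : Ω' → ℝ)
    (hϑ : ϑ = fun ω' =>
      (1 / (m 0 : ℝ)) * ∑ k ∈ Finset.range (m 0), ζ 0 (ωs k ω')
      + ∑ j ∈ Finset.Icc 1 n, ρ j *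
          ((1 / (m j : ℝ)) * ∑ k ∈ Finset.range (m j), ζ j (ωs k ω')
            - (1 / (m (j - 1) : ℝ)) * ∑ k ∈ Finset.range (m (j - 1)), ζ j (ωs k ω'))) :
    variance ϑ P' = variance (ζ 0) P / (m 0 : ℝ)
      + ∑ j ∈ Finset.Icc 1 n, (1 / (m (j - 1) : ℝ) - 1 / (m j : ℝ)) *
          (ρ j ^ 2 * variance (ζ j) P - 2 * ρ j * cov P (ζ 0) (ζ j)) :=
  multifidelity_estimator_variance_general P P' n ζ hζ ρ m hm0 hmono ωs hindep hlaw ϑ hϑ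
end

section
/- Under the hypotheses of the multi-fidelity optimal-allocation theorem (σ_j > 0, γ_j > 0, correlations r_j := Cov(ζ_0, ζ_j)/(σ_0 σ_j) with r_0 = 1, r_{n+1} := 0, |r_j| > |r_{j+1}|, r_1² < 1, and γ_i/γ_{i+1} > (r_i² − r_{i+1}²)/(r_{i+1}² − r_{i+2}²)), the optimal solution (m̆, ρ̆) with m̆_0 = B(∑_{j=0}^n √(γ_j γ_0 (r_j² − r_{j+1}²)/(1 − r_1²)))^{−1}, m̆_j = m̆_0 √((γ_0/γ_j)(r_j² − r_{j+1}²)/(1 − r_1²)) and ρ̆_j = Cov(ζ_0, ζ_j)/Var(ζ_j) achieves the variance-reduction factor E(m̆, ρ̆) · p / Var(ζ_0) = ( ∑_{j=0}^n √( (γ_j/γ_0)(r_j² − r_{j+1}²) ) )², where p := B/γ_0; i.e., relative to the plain Monte Carlo estimator of E[ζ_0] using the same budget B, the mean squared error is multiplied by this factor. -/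
open MeasureTheory ProbabilityTheory

/-!
With `ρ̆_j = Cov(ζ_0, ζ_j)/σ_j²` the `j`-th bracket of `E` equals `-σ_0² r_j²`, so summation by
parts turns `E(m̆, ρ̆)` into `σ_0² ∑_j (r_j² − r_{j+1}²)/m̆_j`.  Writing `d_j = r_j² − r_{j+1}²`,
each summand `d_j/m̆_j` is proportional to `√(γ_j d_j/γ_0)`, and so is the `j`-th summand of the
normalising sum in `m̆_0`; the variance is therefore `σ_0² γ_0 (∑_j √(γ_j d_j/γ_0))² / B`.
-/

open Finset

theorem cov_self_eq_variance {Ω : Type*} [MeasurableSpace Ω] {P : Measure Ω} {X : Ω → ℝ}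
    (hX : AEMeasurable X P) : cov P X X = variance X P := by
  rw [variance_eq_integral hX, cov]
  simp only [← sq]

theorem sub_mul_sum_Icc_eq_sum_range {R : Type*} [CommRing R] (f s : ℕ → R) (n : ℕ) :
    s 0 * f 0 - ∑ j ∈ Icc 1 n, (f (j - 1) - f j) * s j
      = ∑ j ∈ range (n + 1), (s j - s (j + 1)) * f j + s (n + 1) * f n := by
  induction n with
  | zero => simp; ring
  | succ n ih =>
    rw [sum_Icc_succ_top (by omega), sum_range_succ, Nat.add_sub_cancel]
    linear_combination ih

theorem optimal_control_variate_term (a s₀ s : ℝ) (hs₀ : s₀ ≠ 0) :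
    (a / s ^ 2) ^ 2 * s ^ 2 - 2 * (a / s ^ 2) * a = -(s₀ ^ 2 * (a / (s₀ * s)) ^ 2) := by
  rcases eq_or_ne s 0 with rfl | hs
  · simp
  · field_simp
    ring

theorem mul_inv_sqrt_mul_div {a c : ℝ} (ha : 0 < a) (hc : 0 < c) (d : ℝ) :
    d * (√(a * d / c))⁻¹ = √c * √(a⁻¹ * d) := by
  rcases le_or_gt d 0 with hd | hd
  · have had : a * d ≤ 0 := mul_nonpos_of_nonneg_of_nonpos ha.le hd
    have had' : a⁻¹ * d ≤ 0 := mul_nonpos_of_nonneg_of_nonpos (inv_nonneg.mpr ha.le) hd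
    rw [Real.sqrt_eq_zero'.mpr (div_nonpos_of_nonpos_of_nonneg had hc.le),
      Real.sqrt_eq_zero'.mpr had']
    simp
  · rw [Real.sqrt_div' _ hc.le, Real.sqrt_mul ha.le, Real.sqrt_mul (by positivity), Real.sqrt_inv]
    have : √a ≠ 0 := by positivity
    have : √d ≠ 0 := by positivity
    field_simp
    rw [Real.sq_sqrt hd.le]

theorem sqrt_mul_mul_div {g₀ c : ℝ} (hg₀ : 0 < g₀) (hc : 0 < c) (g d : ℝ) :
    √(g * g₀ * d / c) = g₀ / √c * √(g / g₀ * d) := by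
  have : g * g₀ * d / c = (g₀ ^ 2 / c) * (g / g₀ * d) := by field_simp
  rw [this, Real.sqrt_mul (by positivity), Real.sqrt_div (sq_nonneg _), Real.sqrt_sq hg₀.le]

theorem sum_mul_inv_optimal_allocation (n : ℕ) (γ d : ℕ → ℝ) (hγ : ∀ j ≤ n, 0 < γ j)
    {c : ℝ} (hc : 0 < c) (B : ℝ) :
    ∑ j ∈ range (n + 1), d j *
        (B * (∑ i ∈ range (n + 1), √(γ i * γ 0 * d i / c))⁻¹ * √(γ 0 / γ j * d j / c))⁻¹
      = γ 0 / B * (∑ j ∈ range (n + 1), √(γ j / γ 0 * d j)) ^ 2 := by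
  have hγ₀ := hγ 0 n.zero_le
  have hterm : ∀ j ∈ range (n + 1), d j * (√(γ 0 / γ j * d j / c))⁻¹ = √c * √(γ j / γ 0 * d j) :=
    fun j hj => by
      rw [mul_inv_sqrt_mul_div (div_pos hγ₀ (hγ j (mem_range_succ_iff.mp hj))) hc, inv_div]
  have hS : ∑ i ∈ range (n + 1), √(γ i * γ 0 * d i / c)
      = γ 0 / √c * ∑ j ∈ range (n + 1), √(γ j / γ 0 * d j) := by
    rw [mul_sum]
    exact sum_congr rfl fun i _ => sqrt_mul_mul_div hγ₀ hc _ _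
  simp_rw [hS, mul_inv, inv_inv]
  generalize hT : ∑ j ∈ range (n + 1), √(γ j / γ 0 * d j) = T
  calc _ = B⁻¹ * (γ 0 / √c * T) * ∑ j ∈ range (n + 1), d j * (√(γ 0 / γ j * d j / c))⁻¹ := by
        rw [mul_sum]
        exact sum_congr rfl fun _ _ => by ring
    _ = _ := by
        rw [sum_congr rfl hterm, ← mul_sum, hT]
        have : √c ≠ 0 := by positivity
        field_simp

theorem variance_at_optimal_control_coefficients (n : ℕ) (m σ C r : ℕ → ℝ) (hσ₀ : σ 0 ≠ 0)
    (hr₀ : r 0 = 1) (hr_top : r (n + 1) = 0) (hr : ∀ j ∈ Icc 1 n, r j = C j / (σ 0 * σ j)) :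
    σ 0 ^ 2 / m 0 + ∑ j ∈ Icc 1 n, (1 / m (j - 1) - 1 / m j) *
        ((C j / σ j ^ 2) ^ 2 * σ j ^ 2 - 2 * (C j / σ j ^ 2) * C j)
      = σ 0 ^ 2 * ∑ j ∈ range (n + 1), (r j ^ 2 - r (j + 1) ^ 2) * (m j)⁻¹ := by
  have habel : (m 0)⁻¹ - ∑ j ∈ Icc 1 n, ((m (j - 1))⁻¹ - (m j)⁻¹) * r j ^ 2
      = ∑ j ∈ range (n + 1), (r j ^ 2 - r (j + 1) ^ 2) * (m j)⁻¹ := by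
    have := sub_mul_sum_Icc_eq_sum_range (fun j => (m j)⁻¹) (fun j => r j ^ 2) n
    simp only [hr₀, hr_top] at this
    simpa using this
  rw [← habel, mul_sub, mul_sum, sub_eq_add_neg, ← sum_neg_distrib, div_eq_mul_inv]
  refine congrArg _ (sum_congr rfl fun j hj => ?_)
  rw [optimal_control_variate_term _ _ _ hσ₀, ← hr j hj, one_div, one_div]
  ring

theorem multifidelity_variance_reduction_factor_general
    {Ω : Type*} [MeasurableSpace Ω] (P : Measure Ω)
    (n : ℕ) (ζ : ℕ → Ω → ℝ) (hζ : ∀ j, j ≤ n → MemLp (ζ j) 2 P)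
    (σ : ℕ → ℝ) (hσdef : σ = fun j => Real.sqrt (variance (ζ j) P))
    (hσpos : ∀ j, j ≤ n → 0 < σ j)
    (γ : ℕ → ℝ) (hγpos : ∀ j, j ≤ n → 0 < γ j)
    (r : ℕ → ℝ)
    (hrdef : r = fun j => if j ≤ n then cov P (ζ 0) (ζ j) / (σ 0 * σ j) else 0)
    (hr1 : r 1 ^ 2 < 1)
    (B : ℝ) (hB : 0 < B)
    (Efun : (ℕ → ℝ) → (ℕ → ℝ) → ℝ)
    (hE : Efun = fun mm ρ => σ 0 ^ 2 / mm 0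
      + ∑ j ∈ Finset.Icc 1 n, (1 / mm (j - 1) - 1 / mm j) *
          (ρ j ^ 2 * σ j ^ 2 - 2 * ρ j * cov P (ζ 0) (ζ j)))
    (breveM : ℕ → ℝ)
    (hbreveM : breveM = fun j =>
      if j = 0 then
        B * (∑ i ∈ Finset.range (n + 1),
          Real.sqrt (γ i * γ 0 * (r i ^ 2 - r (i + 1) ^ 2) / (1 - r 1 ^ 2)))⁻¹
      else
        (B * (∑ i ∈ Finset.range (n + 1),
          Real.sqrt (γ i * γ 0 * (r i ^ 2 - r (i + 1) ^ 2) / (1 - r 1 ^ 2)))⁻¹)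
          * Real.sqrt ((γ 0 / γ j) * (r j ^ 2 - r (j + 1) ^ 2) / (1 - r 1 ^ 2)))
    (breveρ : ℕ → ℝ)
    (hbreveρ : breveρ = fun j => cov P (ζ 0) (ζ j) / variance (ζ j) P)
    (p : ℝ) (hp : p = B / γ 0) :
    Efun breveM breveρ * p / variance (ζ 0) P
      = (∑ j ∈ Finset.range (n + 1),
          Real.sqrt ((γ j / γ 0) * (r j ^ 2 - r (j + 1) ^ 2))) ^ 2 := by
  have hγ₀ := hγpos 0 n.zero_le
  have hσ₀ := (hσpos 0 n.zero_le).ne'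
  have hc : 0 < 1 - r 1 ^ 2 := by linarith
  have hvar : ∀ j, σ j ^ 2 = variance (ζ j) P := fun j => by
    rw [hσdef]
    exact Real.sq_sqrt (variance_nonneg _ _)
  have hr₀ : r 0 = 1 := by
    simp only [hrdef, if_pos n.zero_le]
    rw [cov_self_eq_variance (hζ 0 n.zero_le).aestronglyMeasurable.aemeasurable, ← hvar, sq]
    exact div_self (mul_ne_zero hσ₀ hσ₀)
  have hr_top : r (n + 1) = 0 := by simp [hrdef]
  have hM : ∀ j, breveM j
      = B * (∑ i ∈ range (n + 1), √(γ i * γ 0 * (r i ^ 2 - r (i + 1) ^ 2) / (1 - r 1 ^ 2)))⁻¹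
        * √(γ 0 / γ j * (r j ^ 2 - r (j + 1) ^ 2) / (1 - r 1 ^ 2)) := fun j => by
    rcases eq_or_ne j 0 with rfl | hj
    · simp only [hbreveM, if_pos rfl]
      rw [div_self hγ₀.ne', hr₀, one_pow, one_mul, div_self hc.ne', Real.sqrt_one, mul_one]
    · simp only [hbreveM, if_neg hj]
  have hr : ∀ j ∈ Icc 1 n, r j = cov P (ζ 0) (ζ j) / (σ 0 * σ j) := fun j hj => by
    simp only [hrdef, if_pos (mem_Icc.mp hj).2]
  simp only [hE, hbreveρ, ← hvar]
  rw [variance_at_optimal_control_coefficients n _ σ _ r hσ₀ hr₀ hr_top hr,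
    sum_congr rfl fun j _ => by rw [hM j], sum_mul_inv_optimal_allocation n γ _ hγpos hc, hp]
  field_simp

/-- **Variance reduction of optimal multi-fidelity Monte Carlo.** Under the hypotheses of the
optimal-allocation theorem, the optimal solution `(m̆, ρ̆)` achieves the variance-reduction
factor `E(m̆, ρ̆)·p/Var(ζ 0) = (∑_{j=0}^n √((γ j/γ 0)(r j² − r (j+1)²)))²` with `p = B/γ 0`,
relative to the plain Monte Carlo estimator of `E[ζ 0]` using the same budget `B`. -/
theorem multifidelity_variance_reduction_factor
    {Ω : Type*} [MeasurableSpace Ω] (P : Measure Ω) [IsProbabilityMeasure P]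
    (n : ℕ) (ζ : ℕ → Ω → ℝ) (hζ : ∀ j, j ≤ n → MemLp (ζ j) 2 P)
    (σ : ℕ → ℝ) (hσdef : σ = fun j => Real.sqrt (variance (ζ j) P))
    (hσpos : ∀ j, j ≤ n → 0 < σ j)
    (γ : ℕ → ℝ) (hγpos : ∀ j, j ≤ n → 0 < γ j)
    (r : ℕ → ℝ)
    (hrdef : r = fun j => if j ≤ n then cov P (ζ 0) (ζ j) / (σ 0 * σ j) else 0)
    (hr1 : r 1 ^ 2 < 1)
    (hrdec : ∀ j, 1 ≤ j → j ≤ n → |r (j + 1)| < |r j|)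
    (hcost : ∀ i, i < n →
      (r i ^ 2 - r (i + 1) ^ 2) / (r (i + 1) ^ 2 - r (i + 2) ^ 2) < γ i / γ (i + 1))
    (B : ℝ) (hB : 0 < B)
    (Efun : (ℕ → ℝ) → (ℕ → ℝ) → ℝ)
    (hE : Efun = fun mm ρ => σ 0 ^ 2 / mm 0
      + ∑ j ∈ Finset.Icc 1 n, (1 / mm (j - 1) - 1 / mm j) *
          (ρ j ^ 2 * σ j ^ 2 - 2 * ρ j * cov P (ζ 0) (ζ j)))
    (breveM : ℕ → ℝ)
    (hbreveM : breveM = fun j =>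
      if j = 0 then
        B * (∑ i ∈ Finset.range (n + 1),
          Real.sqrt (γ i * γ 0 * (r i ^ 2 - r (i + 1) ^ 2) / (1 - r 1 ^ 2)))⁻¹
      else
        (B * (∑ i ∈ Finset.range (n + 1),
          Real.sqrt (γ i * γ 0 * (r i ^ 2 - r (i + 1) ^ 2) / (1 - r 1 ^ 2)))⁻¹)
          * Real.sqrt ((γ 0 / γ j) * (r j ^ 2 - r (j + 1) ^ 2) / (1 - r 1 ^ 2)))
    (breveρ : ℕ → ℝ)
    (hbreveρ : breveρ = fun j => cov P (ζ 0) (ζ j) / variance (ζ j) P)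
    (p : ℝ) (hp : p = B / γ 0) :
    Efun breveM breveρ * p / variance (ζ 0) P
      = (∑ j ∈ Finset.range (n + 1),
          Real.sqrt ((γ j / γ 0) * (r j ^ 2 - r (j + 1) ^ 2))) ^ 2 :=
  multifidelity_variance_reduction_factor_general P n ζ hζ σ hσdef hσpos γ hγpos r hrdef hr1 B hB
    Efun hE breveM hbreveM breveρ hbreveρ p hp
end
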